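/- Fix integers 1 ≤ d ≤ d' and a real s ≥ d. Let A and B be bounded subsets of ℝ^{d'}, and set g_A = liminf_{N→∞} ℰ_s(A,N)/τ_{s,d}(N) and g_B = liminf_{N→∞} ℰ_s(B,N)/τ_{s,d}(N); assume 0 < g_A < ∞ and 0 < g_B < ∞. Let N_1 < N_2 < ⋯ be a strictly increasing sequence of positive integers and for each k let ω_{N_k} ⊆ A ∪ B be an N_k-point configuration such that E_s(ω_{N_k})/τ_{s,d}(N_k) → (g_A^{−d/s} + g_B^{−d/s})^{−s/d} as k → ∞. Then |ω_{N_k} ∩ A|/N_k → g_B^{d/s}/(g_A^{d/s} + g_B^{d/s}) as k → ∞. -/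

import Mathlib

open scoped ENNReal NNReal BigOperators Classical
open MeasureTheory Filter Metric Set Topology

noncomputable def rieszEnergy {E : Type*} [PseudoEMetricSpace E] (s : ℝ) (ω : Finset E) : ℝ≥0∞ :=
  ∑ x ∈ ω, ∑ y ∈ ω, if x = y then 0 else edist x y ^ (-s)

/-- Equal to `∞` when `A` has fewer than `N` points. -/
noncomputable def minRieszEnergy {E : Type*} [PseudoEMetricSpace E] (s : ℝ) (A : Set E)
    (N : ℕ) : ℝ≥0∞ :=
  ⨅ (ω : Finset E) (_ : ↑ω ⊆ A) (_ : ω.card = N), rieszEnergy s ω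

noncomputable def tauNorm (s : ℝ) (d : ℕ) (N : ℕ) : ℝ :=
  if s = (d : ℝ) then (N : ℝ) ^ 2 * Real.log N else (N : ℝ) ^ (1 + s / (d : ℝ))

/-!
Split `ω_k` into its `n_k` points in `A` and the remaining points, which lie in `B`. Riesz energy
is superadditive over disjoint unions, so `ℰ_s(A, n_k) + ℰ_s(B, N_k - n_k) ≤ E_s(ω_k)`. Along a
subsequence with `n_k / N_k → β` we have `τ_{s,d}(n_k) / τ_{s,d}(N_k) → β^{1+s/d}`, hence
`g_A β^{1+s/d} + g_B (1-β)^{1+s/d} ≤ (g_A^{-d/s} + g_B^{-d/s})^{-s/d}`. The right side is the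
minimum over `[0,1]` of the strictly convex left side, attained only at
`β* = g_B^{d/s} / (g_A^{d/s} + g_B^{d/s})`: at `β*` the derivatives of the two terms balance, so
the tangent-line inequalities for `t ↦ t^{1+s/d}` add up to the claim. Thus `β*` is the only
cluster point of the fractions `n_k / N_k ∈ [0,1]`.
-/

theorem ENNReal.liminf_add_liminf_le (u v : ℕ → ℝ≥0∞) :
    atTop.liminf u + atTop.liminf v ≤ atTop.liminf (u + v) := by
  have hmono (w : ℕ → ℝ≥0∞) : Monotone fun n => ⨅ i ≥ n, w i :=
    fun _ _ hnm => biInf_mono fun _ hi => hnm.trans hi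
  simp only [liminf_eq_iSup_iInf_of_nat]
  rw [ENNReal.iSup_add_iSup_of_monotone (hmono u) (hmono v)]
  exact iSup_mono fun n => le_iInf₂ fun i hi => add_le_add (iInf₂_le i hi) (iInf₂_le i hi)

theorem ENNReal.toReal_mul_add_toReal_mul_le {a b : ℝ≥0∞} (ha₀ : a ≠ 0) (ha : a ≠ ⊤)
    (hb₀ : b ≠ 0) (hb : b ≠ ⊤) {u v t w : ℝ} (hu : 0 ≤ u) (hv : 0 ≤ v)
    (h : a * ENNReal.ofReal u + b * ENNReal.ofReal v ≤ (a ^ t + b ^ t) ^ w) :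
    a.toReal * u + b.toReal * v ≤ (a.toReal ^ t + b.toReal ^ t) ^ w := by
  have ha' := ENNReal.toReal_pos ha₀ ha
  have hb' := ENNReal.toReal_pos hb₀ hb
  rwa [← ENNReal.ofReal_toReal ha, ← ENNReal.ofReal_toReal hb, ← ENNReal.ofReal_mul ha'.le,
    ← ENNReal.ofReal_mul hb'.le, ← ENNReal.ofReal_add (by positivity) (by positivity),
    ENNReal.ofReal_rpow_of_pos ha', ENNReal.ofReal_rpow_of_pos hb',
    ← ENNReal.ofReal_add (by positivity) (by positivity),
    ENNReal.ofReal_rpow_of_pos (by positivity), ENNReal.ofReal_le_ofReal_iff (by positivity)] at h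

theorem Real.rpow_add_mul_rpow_sub_one_mul_sub_lt_rpow {a t p : ℝ} (ha : 0 < a) (ht : 0 ≤ t)
    (hne : t ≠ a) (hp : 1 < p) : a ^ p + p * a ^ (p - 1) * (t - a) < t ^ p := by
  have hbern := one_add_mul_self_lt_rpow_one_add (s := (t - a) / a)
    (by rw [le_div_iff₀ ha]; linarith) (div_ne_zero (sub_ne_zero.2 hne) ha.ne') hp
  have hscale : a * (1 + (t - a) / a) = t := by field_simp; ring
  calc a ^ p + p * a ^ (p - 1) * (t - a) = a ^ p * (1 + p * ((t - a) / a)) := by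
        rw [Real.rpow_sub_one ha.ne']; field_simp
    _ < a ^ p * (1 + (t - a) / a) ^ p := mul_lt_mul_of_pos_left hbern (by positivity)
    _ = t ^ p := by
        rw [← Real.mul_rpow ha.le (by rw [← mul_nonneg_iff_of_pos_left ha, hscale]; exact ht),
          hscale]

theorem mul_rpow_add_mul_one_sub_rpow_lt {x y p α β : ℝ} (hx : 0 < x) (hy : 0 < y) (hp : 1 < p)
    (hα0 : 0 < α) (hα1 : α < 1) (hβ0 : 0 ≤ β) (hβ1 : β ≤ 1) (hne : β ≠ α)
    (hcrit : x * α ^ (p - 1) = y * (1 - α) ^ (p - 1)) :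
    x * α ^ p + y * (1 - α) ^ p < x * β ^ p + y * (1 - β) ^ p := by
  have hA := Real.rpow_add_mul_rpow_sub_one_mul_sub_lt_rpow hα0 hβ0 hne hp
  have hB := Real.rpow_add_mul_rpow_sub_one_mul_sub_lt_rpow (sub_pos.2 hα1) (sub_nonneg.2 hβ1)
    (fun h => hne (by linarith)) hp
  linear_combination mul_lt_mul_of_pos_left hA hx + mul_lt_mul_of_pos_left hB hy
    - p * (β - α) * hcrit

theorem eq_of_mul_rpow_add_mul_one_sub_rpow_le {x y r β : ℝ} (hx : 0 < x) (hy : 0 < y)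
    (hr : 0 < r) (hβ0 : 0 ≤ β) (hβ1 : β ≤ 1)
    (h : x * β ^ (1 + r) + y * (1 - β) ^ (1 + r) ≤ (x ^ (-r⁻¹) + y ^ (-r⁻¹)) ^ (-r)) :
    β = y ^ r⁻¹ / (x ^ r⁻¹ + y ^ r⁻¹) := by
  set X := x ^ r⁻¹
  set Y := y ^ r⁻¹
  have hX : 0 < X := by positivity
  have hY : 0 < Y := by positivity
  have hXr : X ^ r = x := Real.rpow_inv_rpow hx.le hr.ne'
  have hYr : Y ^ r = y := Real.rpow_inv_rpow hy.le hr.ne'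
  set α := Y / (X + Y)
  set c := x * y / (X + Y) ^ r
  have hα0 : 0 < α := by positivity
  have hα1 : α < 1 := (div_lt_one (by positivity)).2 (by linarith)
  have h1α : 1 - α = X / (X + Y) := by
    rw [eq_div_iff (by positivity), sub_mul, div_mul_cancel₀ _ (by positivity)]; ring
  have hcritA : x * α ^ r = c := by
    rw [Real.div_rpow hY.le (by positivity), hYr]; ring
  have hcritB : y * (1 - α) ^ r = c := by
    rw [h1α, Real.div_rpow hX.le (by positivity), hXr]; ring
  have hmin : (x ^ (-r⁻¹) + y ^ (-r⁻¹)) ^ (-r) = c := by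
    rw [Real.rpow_neg hx.le, Real.rpow_neg hy.le, inv_add_inv hX.ne' hY.ne',
      Real.rpow_neg (by positivity), ← Real.inv_rpow (by positivity), inv_div,
      Real.div_rpow (by positivity) (by positivity), Real.mul_rpow hX.le hY.le, hXr, hYr]
  have hvalue : x * α ^ (1 + r) + y * (1 - α) ^ (1 + r) = c := by
    rw [Real.rpow_add hα0, Real.rpow_add (sub_pos.2 hα1), Real.rpow_one, Real.rpow_one]
    linear_combination α * hcritA + (1 - α) * hcritB
  by_contra hne
  have hlt := mul_rpow_add_mul_one_sub_rpow_lt hx hy (p := 1 + r) (by linarith) hα0 hα1 hβ0 hβ1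
    hne (by rw [add_sub_cancel_left, hcritA, hcritB])
  linarith

section RieszEnergy

variable {E : Type*} [PseudoEMetricSpace E] (s : ℝ)

theorem rieszEnergy_add_le_rieszEnergy_union {ω₁ ω₂ : Finset E} (h : Disjoint ω₁ ω₂) :
    rieszEnergy s ω₁ + rieszEnergy s ω₂ ≤ rieszEnergy s (ω₁ ∪ ω₂) := by
  rw [rieszEnergy, rieszEnergy, rieszEnergy, Finset.sum_union h]
  gcongr
  exacts [Finset.subset_union_left, Finset.subset_union_right]

theorem minRieszEnergy_le_rieszEnergy {A : Set E} {ω : Finset E} (h : ↑ω ⊆ A) :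
    minRieszEnergy s A ω.card ≤ rieszEnergy s ω :=
  iInf_le_of_le ω (iInf_le_of_le h (iInf_le_of_le rfl le_rfl))

theorem minRieszEnergy_add_minRieszEnergy_le {A B : Set E} {ω : Finset E} (h : ↑ω ⊆ A ∪ B) :
    minRieszEnergy s A (ω.filter (· ∈ A)).card + minRieszEnergy s B (ω.filter (· ∉ A)).card
      ≤ rieszEnergy s ω := by
  have hA : ↑(ω.filter (· ∈ A)) ⊆ A := fun z hz => (Finset.mem_filter.1 hz).2
  have hB : ↑(ω.filter (· ∉ A)) ⊆ B := fun z hz => by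
    obtain ⟨hzω, hzA⟩ := Finset.mem_filter.1 hz
    exact (h hzω).resolve_left hzA
  calc _ ≤ rieszEnergy s (ω.filter (· ∈ A)) + rieszEnergy s (ω.filter (· ∉ A)) :=
        add_le_add (minRieszEnergy_le_rieszEnergy s hA) (minRieszEnergy_le_rieszEnergy s hB)
    _ ≤ rieszEnergy s ω := by
        simpa only [Finset.filter_union_filter_not_eq] using
          rieszEnergy_add_le_rieszEnergy_union s (Finset.disjoint_filter_filter_not ω ω (· ∈ A))

end RieszEnergy

theorem tendsto_atTop_of_tendsto_div_pos {ι : Type*} {l : Filter ι} {n M : ι → ℕ} {β : ℝ}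
    (hM : Tendsto M l atTop) (hβ : 0 < β) (hlim : Tendsto (fun k => (n k : ℝ) / M k) l (𝓝 β)) :
    Tendsto n l atTop := by
  rw [← tendsto_natCast_atTop_iff (R := ℝ)]
  refine (hlim.pos_mul_atTop hβ (tendsto_natCast_atTop_atTop.comp hM)).congr' ?_
  filter_upwards [hM.eventually_ge_atTop 1] with k hk
  exact div_mul_cancel₀ _ (Nat.cast_ne_zero.2 (by omega))

theorem tauNorm_pos (s : ℝ) (d : ℕ) {N : ℕ} (hN : 2 ≤ N) : 0 < tauNorm s d N := by
  have hN1 : (1 : ℝ) < N := by exact_mod_cast hN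
  rw [tauNorm]
  split_ifs
  · have := Real.log_pos hN1
    positivity
  · positivity

theorem tendsto_tauNorm_div_tauNorm {s : ℝ} {d : ℕ} (hd : d ≠ 0) {n M : ℕ → ℕ} {β : ℝ}
    (hM : Tendsto M atTop atTop) (hβ : 0 < β)
    (hlim : Tendsto (fun k => (n k : ℝ) / M k) atTop (𝓝 β)) :
    Tendsto (fun k => tauNorm s d (n k) / tauNorm s d (M k)) atTop
      (𝓝 (β ^ (1 + s / d))) := by
  have hn := tendsto_atTop_of_tendsto_div_pos hM hβ hlim
  by_cases hsd : s = d
  · have hexp : β ^ (1 + s / d) = β ^ 2 := by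
      rw [hsd, div_self (Nat.cast_ne_zero.2 hd), one_add_one_eq_two, Real.rpow_two]
    have hlogM : Tendsto (fun k => (Real.log (M k))⁻¹) atTop (𝓝 0) :=
      (Real.tendsto_log_atTop.comp (tendsto_natCast_atTop_atTop.comp hM)).inv_tendsto_atTop
    have hlim' : Tendsto (fun k => ((n k : ℝ) / M k) ^ 2 *
        (Real.log ((n k : ℝ) / M k) / Real.log (M k) + 1)) atTop (𝓝 (β ^ 2)) := by
      simpa [div_eq_mul_inv] using (hlim.pow 2).mul
        ((((Real.continuousAt_log hβ.ne').tendsto.comp hlim).mul hlogM).add_const 1)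
    rw [hexp]
    refine hlim'.congr' ?_
    filter_upwards [hn.eventually_ge_atTop 2, hM.eventually_ge_atTop 2] with k hkn hkM
    have hn0 : (0 : ℝ) < n k := by positivity
    have hM0 : (0 : ℝ) < M k := by positivity
    have hlogM0 : 0 < Real.log (M k) := Real.log_pos (by exact_mod_cast hkM)
    simp only [tauNorm, if_pos hsd]
    rw [Real.log_div hn0.ne' hM0.ne']
    field_simp
    ring
  · have heq : (fun k => tauNorm s d (n k) / tauNorm s d (M k))
        = fun k => ((n k : ℝ) / M k) ^ (1 + s / d) := by
      ext k
      simp only [tauNorm, if_neg hsd, Real.div_rpow (Nat.cast_nonneg _) (Nat.cast_nonneg _)]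
    rw [heq]
    exact (Real.continuousAt_rpow_const β _ (Or.inl hβ.ne')).tendsto.comp hlim

theorem liminf_div_tauNorm_mul_le {s : ℝ} {d : ℕ} (hd : d ≠ 0) (hs : 0 ≤ s) (u : ℕ → ℝ≥0∞)
    {n M : ℕ → ℕ} {β : ℝ} (hM : Tendsto M atTop atTop) (hβ : 0 ≤ β)
    (hlim : Tendsto (fun k => (n k : ℝ) / M k) atTop (𝓝 β)) :
    (atTop.liminf fun N => u N / ENNReal.ofReal (tauNorm s d N))
        * ENNReal.ofReal (β ^ (1 + s / d))
      ≤ atTop.liminf fun k => u (n k) / ENNReal.ofReal (tauNorm s d (M k)) := by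
  set τ : ℕ → ℝ≥0∞ := fun N => ENNReal.ofReal (tauNorm s d N)
  rcases hβ.eq_or_lt with rfl | hβ
  · rw [Real.zero_rpow (by positivity), ENNReal.ofReal_zero, mul_zero]
    exact zero_le
  have hn := tendsto_atTop_of_tendsto_div_pos hM hβ hlim
  have hratio :
      Tendsto (fun k => τ (n k) / τ (M k)) atTop (𝓝 (ENNReal.ofReal (β ^ (1 + s / d)))) := by
    refine (ENNReal.tendsto_ofReal (tendsto_tauNorm_div_tauNorm hd hM hβ hlim)).congr' ?_
    filter_upwards [hM.eventually_ge_atTop 2] with k hk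
    exact ENNReal.ofReal_div_of_pos (tauNorm_pos s d hk)
  have hfactor : (fun k => u (n k) / τ (M k))
      =ᶠ[atTop] fun k => u (n k) / τ (n k) * (τ (n k) / τ (M k)) := by
    filter_upwards [hn.eventually_ge_atTop 2] with k hk
    rw [← mul_div_assoc, ENNReal.div_mul_cancel (ENNReal.ofReal_pos.2 (tauNorm_pos s d hk)).ne'
      ENNReal.ofReal_ne_top]
  calc _ ≤ (atTop.liminf fun k => u (n k) / τ (n k))
        * atTop.liminf fun k => τ (n k) / τ (M k) := by
        rw [hratio.liminf_eq]
        gcongr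
        exact hn.liminf_le_liminf_comp
    _ ≤ _ := ENNReal.le_liminf_mul
    _ = _ := (liminf_congr hfactor).symm

theorem le_liminf_rieszEnergy_div_tauNorm {E : Type*} [PseudoEMetricSpace E] {s : ℝ} {d : ℕ}
    (hd : d ≠ 0) (hs : 0 ≤ s) {A B : Set E} {ω : ℕ → Finset E} (hsub : ∀ k, ↑(ω k) ⊆ A ∪ B)
    (hcard : Tendsto (fun k => (ω k).card) atTop atTop) {β : ℝ} (hβ0 : 0 ≤ β) (hβ1 : β ≤ 1)
    (hfrac : Tendsto (fun k => (((ω k).filter (· ∈ A)).card : ℝ) / (ω k).card) atTop (𝓝 β)) :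
    (atTop.liminf fun N => minRieszEnergy s A N / ENNReal.ofReal (tauNorm s d N))
          * ENNReal.ofReal (β ^ (1 + s / d))
        + (atTop.liminf fun N => minRieszEnergy s B N / ENNReal.ofReal (tauNorm s d N))
          * ENNReal.ofReal ((1 - β) ^ (1 + s / d))
      ≤ atTop.liminf fun k => rieszEnergy s (ω k) / ENNReal.ofReal (tauNorm s d (ω k).card) := by
  have hfracB : Tendsto (fun k => (((ω k).filter (· ∉ A)).card : ℝ) / (ω k).card) atTop
      (𝓝 (1 - β)) := by
    refine (tendsto_const_nhds.sub hfrac).congr' ?_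
    filter_upwards [hcard.eventually_ge_atTop 1] with k hk
    have hsplit : ((ω k).card : ℝ) = ((ω k).filter (· ∈ A)).card + ((ω k).filter (· ∉ A)).card :=
      mod_cast (Finset.card_filter_add_card_filter_not (· ∈ A)).symm
    have hN : (0 : ℝ) < (ω k).card := by exact_mod_cast hk
    field_simp
    linarith
  calc _ ≤ (atTop.liminf fun k => minRieszEnergy s A ((ω k).filter (· ∈ A)).card
            / ENNReal.ofReal (tauNorm s d (ω k).card))
        + atTop.liminf fun k => minRieszEnergy s B ((ω k).filter (· ∉ A)).card
            / ENNReal.ofReal (tauNorm s d (ω k).card) :=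
        add_le_add (liminf_div_tauNorm_mul_le hd hs _ hcard hβ0 hfrac)
          (liminf_div_tauNorm_mul_le hd hs _ hcard (sub_nonneg.2 hβ1) hfracB)
    _ ≤ _ := ENNReal.liminf_add_liminf_le _ _
    _ ≤ _ := liminf_le_liminf <| Eventually.of_forall fun k => by
        rw [Pi.add_apply, ← ENNReal.add_div]
        gcongr
        exact minRieszEnergy_add_minRieszEnergy_le s (hsub k)

theorem frac_points_in_A_tendsto_general (d d' : ℕ) (hd : 1 ≤ d) (s : ℝ)
    (hs : (d : ℝ) ≤ s)
    (A B : Set (EuclideanSpace ℝ (Fin d')))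
    (gA gB : ℝ≥0∞)
    (hgA : gA = atTop.liminf fun N : ℕ =>
      minRieszEnergy s A N / ENNReal.ofReal (tauNorm s d N))
    (hgB : gB = atTop.liminf fun N : ℕ =>
      minRieszEnergy s B N / ENNReal.ofReal (tauNorm s d N))
    (hgA0 : 0 < gA) (hgAfin : gA < ⊤) (hgB0 : 0 < gB) (hgBfin : gB < ⊤)
    (Nseq : ℕ → ℕ) (hmono : StrictMono Nseq)
    (ω : ℕ → Finset (EuclideanSpace ℝ (Fin d')))
    (hsub : ∀ k, ↑(ω k) ⊆ A ∪ B) (hcard : ∀ k, (ω k).card = Nseq k)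
    (hconv : Tendsto
      (fun k : ℕ => rieszEnergy s (ω k) / ENNReal.ofReal (tauNorm s d (Nseq k)))
      atTop
      (𝓝 ((gA ^ (-(d : ℝ) / s) + gB ^ (-(d : ℝ) / s)) ^ (-(s / (d : ℝ)))))) :
    Tendsto (fun k : ℕ => ((↑(ω k) ∩ A).ncard : ℝ) / (Nseq k : ℝ)) atTop
      (𝓝 (gB.toReal ^ ((d : ℝ) / s) /
        (gA.toReal ^ ((d : ℝ) / s) + gB.toReal ^ ((d : ℝ) / s)))) := by
  have hd0 : (0 : ℝ) < d := by exact_mod_cast hd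
  have hr : 0 < s / d := div_pos (hd0.trans_le hs) hd0
  have hfrac (k : ℕ) : ((↑(ω k) ∩ A).ncard : ℝ) / Nseq k
      = (((ω k).filter (· ∈ A)).card : ℝ) / (ω k).card := by
    rw [hcard, ← Set.ncard_coe_finset, Finset.coe_filter]
    rfl
  simp_rw [hfrac, ← inv_div (s : ℝ)]
  refine isCompact_Icc.tendsto_nhds_of_unique_mapClusterPt
    (Eventually.of_forall fun k => ⟨by positivity, div_le_one_of_le₀
      (by exact_mod_cast Finset.card_filter_le _ _) (by positivity)⟩) fun β hβI hβ => ?_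
  obtain ⟨hβ0, hβ1⟩ := hβI
  obtain ⟨ψ, hψ, hlim⟩ := hβ.tendsto_subseq
  have hcardψ : Tendsto (fun k => (ω (ψ k)).card) atTop atTop := by
    simpa only [Function.comp_def, hcard] using (hmono.comp hψ).tendsto_atTop
  have hbound := le_liminf_rieszEnergy_div_tauNorm (Nat.one_le_iff_ne_zero.1 hd)
    (hd0.trans_le hs).le (fun k => hsub (ψ k)) hcardψ hβ0 hβ1 hlim
  have hconvψ := hconv.comp hψ.tendsto_atTop
  simp only [Function.comp_def, ← hcard] at hconvψ
  rw [hconvψ.liminf_eq, ← hgA, ← hgB, neg_div, ← inv_div (s : ℝ)] at hbound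
  exact eq_of_mul_rpow_add_mul_one_sub_rpow_le (ENNReal.toReal_pos hgA0.ne' hgAfin.ne)
    (ENNReal.toReal_pos hgB0.ne' hgBfin.ne) hr hβ0 hβ1
    (ENNReal.toReal_mul_add_toReal_mul_le hgA0.ne' hgAfin.ne hgB0.ne' hgBfin.ne (by positivity)
      (by positivity) hbound)

/-- if a sequence of configurations on `A ∪ B` attains the optimal combined
energy asymptotics, then the proportion of points in `A` tends to
`g_B^{d/s}/(g_A^{d/s}+g_B^{d/s})`. -/
theorem frac_points_in_A_tendsto (d d' : ℕ) (hd : 1 ≤ d) (hdd : d ≤ d') (s : ℝ)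
    (hs : (d : ℝ) ≤ s)
    (A B : Set (EuclideanSpace ℝ (Fin d')))
    (hA : Bornology.IsBounded A) (hB : Bornology.IsBounded B)
    (gA gB : ℝ≥0∞)
    (hgA : gA = atTop.liminf fun N : ℕ =>
      minRieszEnergy s A N / ENNReal.ofReal (tauNorm s d N))
    (hgB : gB = atTop.liminf fun N : ℕ =>
      minRieszEnergy s B N / ENNReal.ofReal (tauNorm s d N))
    (hgA0 : 0 < gA) (hgAfin : gA < ⊤) (hgB0 : 0 < gB) (hgBfin : gB < ⊤)
    (Nseq : ℕ → ℕ) (hmono : StrictMono Nseq) (hpos : ∀ k, 0 < Nseq k)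
    (ω : ℕ → Finset (EuclideanSpace ℝ (Fin d')))
    (hsub : ∀ k, ↑(ω k) ⊆ A ∪ B) (hcard : ∀ k, (ω k).card = Nseq k)
    (hconv : Tendsto
      (fun k : ℕ => rieszEnergy s (ω k) / ENNReal.ofReal (tauNorm s d (Nseq k)))
      atTop
      (𝓝 ((gA ^ (-(d : ℝ) / s) + gB ^ (-(d : ℝ) / s)) ^ (-(s / (d : ℝ)))))) :
    Tendsto (fun k : ℕ => ((↑(ω k) ∩ A).ncard : ℝ) / (Nseq k : ℝ)) atTop
      (𝓝 (gB.toReal ^ ((d : ℝ) / s) /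
        (gA.toReal ^ ((d : ℝ) / s) + gB.toReal ^ ((d : ℝ) / s)))) :=
  frac_points_in_A_tendsto_general d d' hd s hs A B gA gB hgA hgB hgA0 hgAfin hgB0 hgBfin Nseq hmono
    ω hsub hcard hconv
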